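/- Let ρ be a density matrix on ℂ^d. Suppose there exist real phases φ_0, …, φ_{d−1} such that, with the diagonal unitary U = Σ_k e^{iφ_k}|k⟩⟨k|, the matrix ρ' = UρU† satisfies ρ'_{ij} = −|ρ_{ij}| for all i ≠ j. Then C_w(ρ) ≥ C_{l₁}(ρ). -/

import Mathlib

open Matrix BigOperators
open scoped ComplexOrder

noncomputable section

/-- A density matrix: positive semidefinite with unit trace. -/
def IsDensity {n : Type*} [Fintype n] (ρ : Matrix n n ℂ) : Prop :=
  ρ.PosSemidef ∧ ρ.trace = 1

/-- A matrix is incoherent if it is diagonal in the fixed (standard) basis. -/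
def IsIncoherent {n : Type*} (σ : Matrix n n ℂ) : Prop :=
  ∀ i j, i ≠ j → σ i j = 0

/-- The coherence weight of a state `ρ`. -/
noncomputable def cohWeight {n : Type*} [Fintype n] (ρ : Matrix n n ℂ) : ℝ :=
  sInf {s : ℝ | s ∈ Set.Icc (0 : ℝ) 1 ∧
    ∃ σ τ : Matrix n n ℂ,
      IsDensity σ ∧ IsIncoherent σ ∧ IsDensity τ ∧
      ρ = (1 - s) • σ + s • τ}

/-- The robustness of coherence. -/
noncomputable def cohRobustness {n : Type*} [Fintype n] (ρ : Matrix n n ℂ) : ℝ :=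
  sInf {s : ℝ | 0 ≤ s ∧ ∃ τ : Matrix n n ℂ, IsDensity τ ∧
    IsIncoherent ((1 + s)⁻¹ • (ρ + s • τ))}

/-- The `l₁` norm of coherence: sum of absolute values of off-diagonal entries. -/
noncomputable def Cl1 {n : Type*} [Fintype n] [DecidableEq n] (ρ : Matrix n n ℂ) : ℝ :=
  ∑ i : n, ∑ j : n, if i = j then 0 else ‖ρ i j‖

/-!
If `ρ = (1 - s) σ + s τ` with `σ` diagonal, then `ρ` and `s τ` agree off the diagonal. With
`U = diag (e^{iφ_k})`, the matrix `U τ Uᴴ` is positive semidefinite, so the sum of all its entries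
(its quadratic form at the all-ones vector) is nonnegative. Its diagonal sums to `tr τ = 1` and,
by the phase hypothesis, `s` times its off-diagonal part sums to `-C_{l₁}(ρ)`; hence
`0 ≤ s - C_{l₁}(ρ)` for every admissible `s`.
-/

namespace Matrix

variable {n : Type*} [Fintype n]

lemma PosSemidef.sum_sum_nonneg {R : Type*} [CommRing R] [PartialOrder R] [StarRing R]
    {M : Matrix n n R} (hM : M.PosSemidef) : 0 ≤ ∑ i, ∑ j, M i j := by
  simpa [dotProduct, mulVec] using hM.dotProduct_mulVec_nonneg 1

lemma diagonal_mul_mul_conjTranspose_diagonal_apply {R : Type*} [Semiring R] [StarRing R]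
    [DecidableEq n] (e : n → R) (A : Matrix n n R) (i j : n) :
    (diagonal e * A * (diagonal e)ᴴ) i j = e i * A i j * star (e j) := by
  rw [diagonal_conjTranspose, mul_diagonal, diagonal_mul]
  rfl

end Matrix

section Coherence

variable {n : Type*}

lemma isIncoherent_diagonal [DecidableEq n] (d : n → ℂ) : IsIncoherent (diagonal d) :=
  fun _ _ hij => diagonal_apply_ne d hij

lemma IsIncoherent.apply_eq_of_eq_add {ρ σ τ : Matrix n n ℂ} {s : ℝ} (hσ : IsIncoherent σ)
    (hρ : ρ = (1 - s) • σ + s • τ) {i j : n} (hij : i ≠ j) : ρ i j = s * τ i j := by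
  simp [hρ, hσ i j hij, Complex.real_smul]

variable [Fintype n] [DecidableEq n]

lemma IsDensity.diagonal_diag {ρ : Matrix n n ℂ} (hρ : IsDensity ρ) :
    IsDensity (diagonal ρ.diag) :=
  ⟨.diagonal fun _ => hρ.1.diag_nonneg, by rw [trace_diagonal]; exact hρ.2⟩

lemma le_cohWeight {ρ : Matrix n n ℂ} (hρ : IsDensity ρ) {c : ℝ}
    (h : ∀ (s : ℝ) (σ τ : Matrix n n ℂ), 0 ≤ s → IsIncoherent σ → IsDensity τ →
      ρ = (1 - s) • σ + s • τ → c ≤ s) :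
    c ≤ cohWeight ρ := by
  refine le_csInf ⟨1, ⟨zero_le_one, le_rfl⟩, diagonal ρ.diag, ρ, hρ.diagonal_diag,
    isIncoherent_diagonal _, hρ, by simp⟩ ?_
  rintro s ⟨⟨hs, -⟩, σ, τ, -, hσ, hτ, hρ⟩
  exact h s σ τ hs hσ hτ hρ

lemma Cl1_le_of_offDiag_eq_mul {ρ τ : Matrix n n ℂ} {s : ℝ} (hs : 0 ≤ s) (hτ : IsDensity τ)
    (hoff : ∀ i j, i ≠ j → ρ i j = s * τ i j) (e : n → ℂ) (he : ∀ k, ‖e k‖ = 1)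
    (hphase : ∀ i j, i ≠ j → e i * ρ i j * star (e j) = -‖ρ i j‖) :
    Cl1 ρ ≤ s := by
  have hT : 0 ≤ ∑ i, ∑ j, e i * τ i j * star (e j) := by
    simpa only [diagonal_mul_mul_conjTranspose_diagonal_apply] using
      (hτ.1.mul_mul_conjTranspose_same (diagonal e)).sum_sum_nonneg
  have hentry : ∀ i j, s * (e i * τ i j * star (e j)) =
      (if i = j then s * τ i j else 0) - (if i = j then 0 else (‖ρ i j‖ : ℂ)) := by
    intro i j
    obtain rfl | hij := eq_or_ne i j
    · have hunit : e i * star (e i) = 1 := by simp [Complex.mul_conj', he]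
      simp only [if_true, sub_zero]
      linear_combination s * τ i i * hunit
    · rw [if_neg hij, if_neg hij, zero_sub, ← hphase i j hij, hoff i j hij]
      ring
  have hsum : (s : ℂ) * ∑ i, ∑ j, e i * τ i j * star (e j) = ((s - Cl1 ρ : ℝ) : ℂ) := by
    simp only [Finset.mul_sum, hentry, Finset.sum_sub_distrib, Finset.sum_ite_eq,
      Finset.mem_univ, if_true]
    rw [← Finset.mul_sum, show ∑ i, τ i i = 1 from hτ.2, Cl1]
    simp only [mul_one, Complex.ofReal_sub, Complex.ofReal_sum, apply_ite Complex.ofReal,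
      Complex.ofReal_zero]
  have := mul_nonneg (Complex.zero_le_real.mpr hs) hT
  rw [hsum, Complex.zero_le_real] at this
  linarith

end Coherence

theorem cohWeight_ge_l1_of_negative_phases {d : ℕ}
    (ρ : Matrix (Fin d) (Fin d) ℂ) (hρ : IsDensity ρ)
    (φ : Fin d → ℝ)
    (hphase : ∀ i j, i ≠ j →
      (Matrix.diagonal (fun k : Fin d => Complex.exp ((φ k : ℂ) * Complex.I)) * ρ *
        (Matrix.diagonal (fun k : Fin d => Complex.exp ((φ k : ℂ) * Complex.I)))ᴴ) i j
        = -(‖ρ i j‖ : ℂ)) :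
    cohWeight ρ ≥ Cl1 ρ := by
  refine le_cohWeight hρ fun s σ τ hs hσ hτ hdecomp => ?_
  refine Cl1_le_of_offDiag_eq_mul hs hτ (fun i j => hσ.apply_eq_of_eq_add hdecomp) _
    (fun k => Complex.norm_exp_ofReal_mul_I (φ k)) fun i j hij => ?_
  simpa only [diagonal_mul_mul_conjTranspose_diagonal_apply] using hphase i j hij
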